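/- Let V be a unital commutative associative ℂ-algebra with a trace str, and let A be a differential operator of order at most l ≥ 3 on V which is strongly compatible with the trace. Then for all f_1,…,f_l, f_{l+1} ∈ V one has str(⟨f_1,…,f_l⟩_l^A · f_{l+1} · (−)) = 0. -/
import Mathlib


/-- The Koszul bracket hierarchy of an operator `D` on a commutative algebra:
`⟨f⟩₁ = D f` and
`⟨f₁,…,f_{l+1}⟩_{l+1} = ⟨f₁,…,f_{l-1},f_l·f_{l+1}⟩_l − ⟨f₁,…,f_l⟩_l·f_{l+1} − f_l·⟨f₁,…,f_{l-1},f_{l+1}⟩_l`. -/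
def koszul {V : Type*} [CommRing V] (D : V → V) : (l : ℕ) → (Fin l → V) → V
  | 0, _ => 0
  | 1, f => D (f 0)
  | l + 2, f =>
      koszul D (l + 1)
        (Fin.snoc (fun i : Fin l => f i.castSucc.castSucc)
          (f ⟨l, by omega⟩ * f ⟨l + 1, by omega⟩))
      - koszul D (l + 1) (fun i => f i.castSucc) * f ⟨l + 1, by omega⟩
      - f ⟨l, by omega⟩ *
          koszul D (l + 1)
            (Fin.snoc (fun i : Fin l => f i.castSucc.castSucc) (f ⟨l + 1, by omega⟩))

/-- `D` is a differential operator of order at most `l` if the `(l+1)`-st Koszul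
bracket vanishes identically. -/
def IsDiffOpOfOrderAtMost {V : Type*} [CommRing V] (D : V → V) (l : ℕ) : Prop :=
  ∀ f : Fin (l + 1) → V, koszul D (l + 1) f = 0

/-- A differential operator `A` of order at most `l` (intended `l ≥ 3`) on a
commutative algebra with a trace `str` is strongly compatible with the trace if
`str(⟨f₁,…,f_{l−1}⟩_{l−1}^A · (−)) = 0` for all `f₁,…,f_{l−1}`. -/
def StronglyCompatibleWithTrace {V : Type*} [CommRing V] [Algebra ℂ V]
    (str : Module.End ℂ V →ₗ[ℂ] ℂ) (A : V → V) (l : ℕ) : Prop :=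
  ∀ f : Fin (l - 1) → V, str (LinearMap.mulLeft ℂ (koszul A (l - 1) f)) = 0

noncomputable def Eop {V : Type*} [CommRing V] [Algebra ℂ V] (A : V →ₗ[ℂ] V) :
    (k : ℕ) → (Fin k → V) → (V →ₗ[ℂ] V)
  | 0, _ => A
  | k + 1, g =>
      (Eop A k (fun i => g i.castSucc)) ∘ₗ LinearMap.mulLeft ℂ (g (Fin.last k))
        - LinearMap.mulLeft ℂ (koszul (⇑A) (k + 1) g)
        - LinearMap.mulLeft ℂ (g (Fin.last k)) ∘ₗ (Eop A k (fun i => g i.castSucc))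

lemma Eop_apply {V : Type*} [CommRing V] [Algebra ℂ V] (A : V →ₗ[ℂ] V) :
    ∀ (k : ℕ) (g : Fin k → V) (w : V), Eop A k g w = koszul (⇑A) (k + 1) (Fin.snoc g w)
  | 0, g, w => by
      show A w = koszul (⇑A) 1 (Fin.snoc g w)
      rw [show koszul (⇑A) 1 (Fin.snoc g w) = A ((Fin.snoc g w : Fin 1 → V) 0) by rw [koszul],
        show (0 : Fin 1) = Fin.last 0 from rfl, Fin.snoc_last]
  | k + 1, g, w => by
      have h1 : (Fin.snoc g w : Fin (k+2) → V) ⟨k+1, by omega⟩ = w := by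
        rw [show (⟨k+1, by omega⟩ : Fin (k+2)) = Fin.last (k+1) from rfl]
        rw [Fin.snoc_last]
      have h2 : (Fin.snoc g w : Fin (k+2) → V) ⟨k, by omega⟩ = g (Fin.last k) := by
        rw [show (⟨k, by omega⟩ : Fin (k+2)) = (Fin.last k).castSucc from rfl]
        rw [Fin.snoc_castSucc]
      have h3 : (fun i : Fin k => (Fin.snoc g w : Fin (k+2) → V) i.castSucc.castSucc)
          = fun i : Fin k => g i.castSucc := by
        funext i; rw [Fin.snoc_castSucc]
      have h4 : (fun i : Fin (k+1) => (Fin.snoc g w : Fin (k+2) → V) i.castSucc) = g := by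
        funext i; rw [Fin.snoc_castSucc]
      rw [show (koszul (⇑A) (k+2) (Fin.snoc g w)) =
        koszul (⇑A) (k + 1)
          (Fin.snoc (fun i : Fin k => (Fin.snoc g w : Fin (k+2) → V) i.castSucc.castSucc)
            ((Fin.snoc g w : Fin (k+2) → V) ⟨k, by omega⟩ * (Fin.snoc g w : Fin (k+2) → V) ⟨k + 1, by omega⟩))
        - koszul (⇑A) (k + 1) (fun i => (Fin.snoc g w : Fin (k+2) → V) i.castSucc) * (Fin.snoc g w : Fin (k+2) → V) ⟨k + 1, by omega⟩
        - (Fin.snoc g w : Fin (k+2) → V) ⟨k, by omega⟩ *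
            koszul (⇑A) (k + 1)
              (Fin.snoc (fun i : Fin k => (Fin.snoc g w : Fin (k+2) → V) i.castSucc.castSucc)
                ((Fin.snoc g w : Fin (k+2) → V) ⟨k + 1, by omega⟩)) from rfl,
        h1, h2, h3, h4]
      rw [show Eop A (k+1) g =
        (Eop A k (fun i => g i.castSucc)) ∘ₗ LinearMap.mulLeft ℂ (g (Fin.last k))
        - LinearMap.mulLeft ℂ (koszul (⇑A) (k + 1) g)
        - LinearMap.mulLeft ℂ (g (Fin.last k)) ∘ₗ (Eop A k (fun i => g i.castSucc)) from rfl]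
      simp only [LinearMap.sub_apply, LinearMap.comp_apply, LinearMap.mulLeft_apply]
      rw [Eop_apply A k, Eop_apply A k]

/-- If `A` is a differential operator of order at most `l ≥ 3` strongly
compatible with the trace, then `str(⟨f₁,…,f_l⟩_l^A · f_{l+1} · (−)) = 0`. -/
theorem trace_koszul_mul_extra {V : Type*} [CommRing V] [Algebra ℂ V]
    (str : Module.End ℂ V →ₗ[ℂ] ℂ)
    (hstr : ∀ P Q : Module.End ℂ V, str (P ∘ₗ Q) = str (Q ∘ₗ P))
    (l : ℕ) (hl : 3 ≤ l)
    (A : V →ₗ[ℂ] V) (hA : IsDiffOpOfOrderAtMost (⇑A) l)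
    (hAc : StronglyCompatibleWithTrace str (⇑A) l)
    (f : Fin (l + 1) → V) :
    str (LinearMap.mulLeft ℂ
      (koszul (⇑A) l (fun i : Fin l => f i.castSucc) * f (Fin.last l))) = 0 := by
  have hA : ∀ f : Fin (l + 1) → V, koszul (⇑A) (l+1) f = 0 := hA
  obtain ⟨m, rfl⟩ : ∃ m, l = m + 1 := ⟨l - 1, by omega⟩
  set g : Fin (m+1) → V := fun i => f i.castSucc with hg
  set z : V := f (Fin.last (m+1)) with hz
  set g' : Fin m → V := fun i => g i.castSucc with hg'
  set a : V := g (Fin.last m) with ha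
  set E : Module.End ℂ V := Eop A m g' with hE
  have hE0 : Eop A (m+1) g = 0 := by
    apply LinearMap.ext; intro w
    rw [Eop_apply]
    exact hA _
  have h : E ∘ₗ LinearMap.mulLeft ℂ a - LinearMap.mulLeft ℂ (koszul (⇑A) (m+1) g)
      - LinearMap.mulLeft ℂ a ∘ₗ E = 0 := hE0
  have hKey : LinearMap.mulLeft ℂ (koszul (⇑A) (m+1) g)
      = E ∘ₗ LinearMap.mulLeft ℂ a - LinearMap.mulLeft ℂ a ∘ₗ E := by
    have h2 : E ∘ₗ LinearMap.mulLeft ℂ a - LinearMap.mulLeft ℂ a ∘ₗ E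
        - LinearMap.mulLeft ℂ (koszul (⇑A) (m+1) g) = 0 := by rw [← h]; abel
    exact (sub_eq_zero.mp h2).symm
  rw [LinearMap.mulLeft_mul, hKey, LinearMap.sub_comp, map_sub,
    LinearMap.comp_assoc, ← LinearMap.mulLeft_mul,
    LinearMap.comp_assoc, hstr (LinearMap.mulLeft ℂ a) (E ∘ₗ LinearMap.mulLeft ℂ z),
    LinearMap.comp_assoc, ← LinearMap.mulLeft_mul, mul_comm z a]
  simp
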